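/- Let α be a real number with 0 < α < π. Then for every real ξ > 0, one has −1 < F̃(ξ,α) < −2α(2π−α)/(α² + (2π−α)²); moreover F̃(ξ,α) tends to −1 as ξ → +∞. In particular the value −1 is never attained by F̃(·,α) on (0,∞). -/

import Mathlib

/-!
Put `a = αξ` and `b = (2π - α)ξ`, so `0 < a < b`. The lower bound is `cosh (b - a) > 1`.
For the upper bound, expressing `cosh a cosh b` and `sinh a sinh b` through `cosh (b ± a)` turns
it into `(cosh d - 1) / d² < (cosh s - 1) / s²` for `d = b - a < s = b + a`; this holds because
`(cosh x - 1) / x² = (sinh (x/2) / (x/2))² / 2` and `sinh x / x` is a secant slope of the convex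
function `sinh` on `[0, ∞)`. The limit follows from writing the ratio as
`tanh a tanh b / ((cosh a cosh b)⁻¹ - 1)`.
-/

open Real Filter

/-- The hyperbolic dispersion function of the corner transmission problem. -/
noncomputable def Ftilde (ξ α : ℝ) : ℝ :=
  Real.sinh (α * ξ) * Real.sinh ((2 * Real.pi - α) * ξ) /
    (1 - Real.cosh (α * ξ) * Real.cosh ((2 * Real.pi - α) * ξ))

open Set Topology

namespace Real

lemma strictConvexOn_sinh : StrictConvexOn ℝ (Ici 0) sinh := by
  refine strictConvexOn_of_deriv2_pos (convex_Ici 0) continuous_sinh.continuousOn fun x hx => ?_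
  rw [interior_Ici] at hx
  simpa only [Function.iterate_succ, Function.iterate_zero, Function.id_comp, Function.comp_apply,
    deriv_sinh, deriv_cosh] using sinh_pos_iff.2 hx

lemma strictMonoOn_sinh_div_self : StrictMonoOn (fun x => sinh x / x) (Ioi 0) := by
  intro x hx y hy hxy
  simpa using strictConvexOn_sinh.secant_strict_mono self_mem_Ici (mem_Ici.2 (le_of_lt hx))
    (mem_Ici.2 (le_of_lt hy)) (ne_of_gt hx) (ne_of_gt hy) hxy

lemma cosh_sub_one_div_sq_eq {x : ℝ} (hx : x ≠ 0) :
    (cosh x - 1) / x ^ 2 = (sinh (x / 2) / (x / 2)) ^ 2 / 2 := by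
  have h := cosh_two_mul (x / 2)
  rw [mul_div_cancel₀ x two_ne_zero, cosh_sq] at h
  rw [h]
  field_simp
  ring

lemma strictMonoOn_cosh_sub_one_div_sq : StrictMonoOn (fun x => (cosh x - 1) / x ^ 2) (Ioi 0) := by
  intro x hx y hy hxy
  dsimp only
  rw [cosh_sub_one_div_sq_eq (ne_of_gt hx), cosh_sub_one_div_sq_eq (ne_of_gt hy)]
  have hx2 : (0 : ℝ) < x / 2 := half_pos hx
  refine div_lt_div_of_pos_right (pow_lt_pow_left₀ ?_ (div_pos (sinh_pos_iff.2 hx2) hx2).le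
    two_ne_zero) two_pos
  exact strictMonoOn_sinh_div_self hx2 (mem_Ioi.2 (half_pos hy)) (by linarith)

lemma sinh_mul_sinh_lt_cosh_mul_cosh_sub_one {a b : ℝ} (hab : a ≠ b) :
    sinh a * sinh b < cosh a * cosh b - 1 := by
  have h := one_lt_cosh.2 (sub_ne_zero.2 hab)
  rw [cosh_sub] at h
  linarith

lemma mul_cosh_mul_cosh_sub_one_lt {a b : ℝ} (ha : 0 < a) (hab : a < b) :
    2 * a * b * (cosh a * cosh b - 1) < (a ^ 2 + b ^ 2) * (sinh a * sinh b) := by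
  have h := strictMonoOn_cosh_sub_one_div_sq (sub_pos.2 hab) (show 0 < a + b by linarith)
    (show b - a < a + b by linarith)
  dsimp only at h
  rw [div_lt_div_iff₀ (by nlinarith) (by nlinarith), cosh_sub, cosh_add] at h
  linear_combination (1 / 2 : ℝ) * h

lemma one_sub_cosh_mul_cosh_neg {a : ℝ} (ha : a ≠ 0) (b : ℝ) : 1 - cosh a * cosh b < 0 := by
  nlinarith [one_lt_cosh.2 ha, one_le_cosh b]

lemma neg_one_lt_sinh_mul_sinh_div_one_sub_cosh_mul_cosh {a b : ℝ} (ha : a ≠ 0) (hab : a ≠ b) :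
    -1 < sinh a * sinh b / (1 - cosh a * cosh b) := by
  rw [lt_div_iff_of_neg (one_sub_cosh_mul_cosh_neg ha b)]
  linarith [sinh_mul_sinh_lt_cosh_mul_cosh_sub_one hab]

lemma sinh_mul_sinh_div_one_sub_cosh_mul_cosh_lt {a b : ℝ} (ha : 0 < a) (hab : a < b) :
    sinh a * sinh b / (1 - cosh a * cosh b) < -2 * a * b / (a ^ 2 + b ^ 2) := by
  rw [div_lt_iff_of_neg (one_sub_cosh_mul_cosh_neg ha.ne' b), div_mul_eq_mul_div,
    div_lt_iff₀ (by positivity)]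
  linarith [mul_cosh_mul_cosh_sub_one_lt ha hab]

lemma tanh_eq_one_sub_exp (x : ℝ) : tanh x = 1 - 2 / (exp (2 * x) + 1) := by
  rw [tanh_eq_sinh_div_cosh, sinh_eq, cosh_eq, exp_neg, two_mul, exp_add]
  field_simp
  ring

lemma tendsto_tanh_atTop : Tendsto tanh atTop (𝓝 1) := by
  have h := tendsto_atTop_add_const_right _ 1
    (tendsto_exp_atTop.comp (tendsto_id.const_mul_atTop two_pos))
  simpa [funext tanh_eq_one_sub_exp] using (h.const_div_atTop 2).const_sub 1

lemma tendsto_cosh_atTop : Tendsto cosh atTop atTop := by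
  refine tendsto_atTop_mono (fun x => ?_) (tendsto_exp_atTop.atTop_div_const two_pos)
  rw [cosh_eq]
  linarith [exp_pos (-x)]

lemma tendsto_sinh_mul_sinh_div_one_sub_cosh_mul_cosh {p q : ℝ} (hp : 0 < p) (hq : 0 < q) :
    Tendsto (fun ξ => sinh (p * ξ) * sinh (q * ξ) / (1 - cosh (p * ξ) * cosh (q * ξ)))
      atTop (𝓝 (-1)) := by
  have hpξ := tendsto_id.const_mul_atTop hp
  have hqξ := tendsto_id.const_mul_atTop hq
  have htanh := (tendsto_tanh_atTop.comp hpξ).mul (tendsto_tanh_atTop.comp hqξ)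
  have hinv := tendsto_inv_atTop_zero.comp
    ((tendsto_cosh_atTop.comp hpξ).atTop_mul_atTop₀ (tendsto_cosh_atTop.comp hqξ))
  have h := htanh.div (hinv.sub_const 1) (by norm_num)
  norm_num at h
  refine h.congr fun ξ => ?_
  simp only [Pi.div_apply, tanh_eq_sinh_div_cosh]
  have := cosh_pos (p * ξ)
  have := cosh_pos (q * ξ)
  field_simp

end Real

theorem hyperbolic_dispersion_range
    (α : ℝ) (hα0 : 0 < α) (hαπ : α < Real.pi) :
    (∀ ξ : ℝ, 0 < ξ →
      -1 < Ftilde ξ α ∧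
      Ftilde ξ α < -2 * α * (2 * Real.pi - α) / (α ^ 2 + (2 * Real.pi - α) ^ 2)) ∧
    Filter.Tendsto (fun ξ => Ftilde ξ α) Filter.atTop (nhds (-1)) := by
  have hβ : 0 < 2 * π - α := by linarith [pi_pos]
  refine ⟨fun ξ hξ => ?_, tendsto_sinh_mul_sinh_div_one_sub_cosh_mul_cosh hα0 hβ⟩
  have ha : 0 < α * ξ := mul_pos hα0 hξ
  have hab : α * ξ < (2 * π - α) * ξ := by gcongr; linarith
  refine ⟨neg_one_lt_sinh_mul_sinh_div_one_sub_cosh_mul_cosh ha.ne' hab.ne, ?_⟩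
  calc Ftilde ξ α < -2 * (α * ξ) * ((2 * π - α) * ξ) / ((α * ξ) ^ 2 + ((2 * π - α) * ξ) ^ 2) :=
        sinh_mul_sinh_div_one_sub_cosh_mul_cosh_lt ha hab
    _ = -2 * α * (2 * π - α) / (α ^ 2 + (2 * π - α) ^ 2) := by
        field_simp
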